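/- Every semilocal commutative ring (a ring with only finitely many maximal ideals) satisfies ASR_2: for any r₁, r₂ ∈ R there exists t ∈ R such that every maximal ideal containing r₁ + t r₂ contains both r₁ and r₂. -/
import Mathlib


theorem semilocal_ASR_two (R : Type*) [CommRing R]
    (hfin : {M : Ideal R | M.IsMaximal}.Finite) (r₁ r₂ : R) :
    ∃ t : R, ∀ M : Ideal R, M.IsMaximal → r₁ + t * r₂ ∈ M →
      Ideal.span ({r₁, r₂} : Set R) ≤ M := by
  classical
  have hS₀fin : {M : Ideal R | M.IsMaximal ∧ r₂ ∉ M ∧ r₁ ∉ M}.Finite :=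
    hfin.subset (fun M hM => hM.1)
  have hS₁fin : {M : Ideal R | M.IsMaximal ∧ r₂ ∉ M ∧ r₁ ∈ M}.Finite :=
    hfin.subset (fun M hM => hM.1)
  set s₀ := hS₀fin.toFinset with hs₀
  set s₁ := hS₁fin.toFinset with hs₁
  set I : Ideal R := s₀.inf id with hI
  -- find t ∈ I avoiding all members of s₁
  have key : ∃ t ∈ I, ∀ M ∈ s₁, t ∉ M := by
    by_contra h
    push_neg at h
    have hsub : (I : Set R) ⊆ ⋃ M ∈ s₁, (M : Set R) := by
      intro t ht
      obtain ⟨M, hM, htM⟩ := h t ht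
      exact Set.mem_biUnion hM htM
    have hp : ∀ M ∈ s₁, M ≠ (⊥ : Ideal R) → M ≠ (⊥ : Ideal R) → M.IsPrime := by
      intro M hM _ _
      exact ((hS₁fin.mem_toFinset.mp hM).1).isPrime
    obtain ⟨M, hM, hIM⟩ := (Ideal.subset_union_prime (⊥ : Ideal R) (⊥ : Ideal R) hp).mp hsub
    have hMprime : M.IsPrime := ((hS₁fin.mem_toFinset.mp hM).1).isPrime
    obtain ⟨N, hN, hNM⟩ := (hMprime.inf_le').mp hIM
    have hNdata := hS₀fin.mem_toFinset.mp hN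
    have hMdata := hS₁fin.mem_toFinset.mp hM
    have : N = M := hNdata.1.eq_of_le hMdata.1.ne_top hNM
    exact hNdata.2.2 (this ▸ hMdata.2.2)
  obtain ⟨t, htI, ht⟩ := key
  refine ⟨t, fun M hM hmem => ?_⟩
  have hboth : r₁ ∈ M ∧ r₂ ∈ M := by
    by_cases h2 : r₂ ∈ M
    · exact ⟨by simpa using M.sub_mem hmem (M.mul_mem_left t h2), h2⟩
    · by_cases h1 : r₁ ∈ M
      · -- M ∈ s₁, so t ∉ M, but t * r₂ = (r₁ + t*r₂) - r₁ ∈ M, contradiction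
        have hMs₁ : M ∈ s₁ := hS₁fin.mem_toFinset.mpr ⟨hM, h2, h1⟩
        have htr₂ : t * r₂ ∈ M := by simpa using M.sub_mem hmem h1
        rcases hM.isPrime.mem_or_mem htr₂ with h | h
        · exact absurd h (ht M hMs₁)
        · exact absurd h h2
      · -- M ∈ s₀, so t ∈ M, so r₁ ∈ M, contradiction
        have hMs₀ : M ∈ s₀ := hS₀fin.mem_toFinset.mpr ⟨hM, h2, h1⟩
        have htM : t ∈ M := by
          have := Finset.inf_le (f := id) hMs₀
          exact this htI
        exact absurd (by simpa using M.sub_mem hmem (M.mul_mem_right r₂ htM)) h1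
  rw [Ideal.span_le]
  rintro x (rfl | rfl)
  · exact hboth.1
  · simpa using hboth.2
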